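/- For the extended Ackermann functions A_α(k,b) indexed by ordinals α < ε₀, one has A_α(k,b) ≥ Nα + b, where Nα is the number of occurrences of ω in the Cantor normal form of α; consequently, for every m and k there are only finitely many α < ε₀ with A_α(k,0) ≤ m. -/

import Mathlib

/-- The predecessor of an ordinal notation: `some β` with `β + 1 = α` if `α` is
a successor, `none` otherwise. -/
def predO : ONote → Option ONote
  | .zero => none
  | .oadd .zero n .zero =>
      some (if h : (n : ℕ) = 1 then .zero
            else .oadd .zero ⟨(n : ℕ) - 1, by have h3 : 0 < (n : ℕ) := n.2; omega⟩ .zero)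
  | .oadd _ _ .zero => none
  | .oadd e n a => (predO a).map (.oadd e n)

/-- The standard fundamental sequences for ordinals below `ε₀` (in Cantor normal
form): `0[x] = 0`, `(β+1)[x] = β`, `(δ + ω^{γ+1})[x] = δ + ω^γ·x` and
`(δ + ω^λ)[x] = δ + ω^{λ[x]}` for limits `λ`. -/
def fundSeq : ONote → ℕ → ONote
  | .zero, _ => .zero
  | .oadd e n (.oadd e' n' a'), x => .oadd e n (fundSeq (.oadd e' n' a') x)
  | .oadd .zero n .zero, _ =>
      if h : (n : ℕ) = 1 then .zero
      else .oadd .zero ⟨(n : ℕ) - 1, by have h3 : 0 < (n : ℕ) := n.2; omega⟩ .zero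
  | .oadd (.oadd f m b) n .zero, x =>
      let tail : ONote :=
        match predO (.oadd f m b) with
        | some e' =>
            if h : x = 0 then .zero
            else .oadd e' ⟨x, Nat.pos_of_ne_zero h⟩ .zero
        | none => .oadd (fundSeq (.oadd f m b) x) 1 .zero
      if h : (n : ℕ) = 1 then tail
      else .oadd (.oadd f m b) ⟨(n : ℕ) - 1, by have h3 : 0 < (n : ℕ) := n.2; omega⟩ tail

mutual
/-- The graph of the extended Ackermann function: `EA k α b v` means
`A_α(k,b) = v`, where for limits `λ` one uses the iterated fundamental-sequence
indices `λ_{l,k,b}` (see `LamSeq`). -/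
inductive EA (k : ℕ) : ONote → ℕ → ℕ → Prop
  | zero (b : ℕ) : EA k .zero b (b + 1)
  | succZero {α β : ONote} {v : ℕ} :
      predO α = some β → IterEA k β k 0 v → EA k α 0 v
  | succStep {α β : ONote} {b w v : ℕ} :
      predO α = some β → EA k α b w → IterEA k β k w v → EA k α (b + 1) v
  | limZero {α μ : ONote} {v : ℕ} :
      α ≠ .zero → predO α = none →
      LamSeq k α 0 k μ → IterEA k μ k 0 v → EA k α 0 v
  | limStep {α μ : ONote} {b w v : ℕ} :
      α ≠ .zero → predO α = none →
      EA k α b w → LamSeq k α w k μ → IterEA k μ k w v → EA k α (b + 1) v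

/-- `IterEA k α n b v` means `(A_α(k,·))^n(b) = v`. -/
inductive IterEA (k : ℕ) : ONote → ℕ → ℕ → ℕ → Prop
  | zero (α : ONote) (b : ℕ) : IterEA k α 0 b b
  | succ {α : ONote} {n b v w : ℕ} :
      IterEA k α n b v → EA k α v w → IterEA k α (n + 1) b w

/-- `LamSeq k λ b l μ` means `μ = λ_{l,k,b}`, where `λ_{0,k,b} = λ[b]` and
`λ_{l+1,k,b} = λ[A_{λ_{l,k,b}}(k,b)]`. -/
inductive LamSeq (k : ℕ) : ONote → ℕ → ℕ → ONote → Prop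
  | zero (α : ONote) (b : ℕ) : LamSeq k α b 0 (fundSeq α b)
  | succ {α μ : ONote} {b l v : ℕ} :
      LamSeq k α b l μ → EA k μ b v → LamSeq k α b (l + 1) (fundSeq α v)
end

/-- `Nα`: the number of occurrences of `ω` in the Cantor normal form of `α`. -/
def Ncount : ONote → ℕ
  | .zero => 0
  | .oadd e n a => (n : ℕ) * (1 + Ncount e) + Ncount a

/-! Simultaneous induction on the derivations of `EA`, `IterEA` and `LamSeq` gives
`Nα + b < A_α(k,b)`. At a successor `β + 1` the function `A_β(k,·)` is iterated `k ≥ 2` times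
and each iteration adds at least `Nβ + 1 ≥ 1`. At a limit `λ`, one step of the fundamental
sequence at an argument `x ≥ 1` satisfies `x ≤ N(λ[x])` and `Nλ ≤ N(λ[x]) + 1`; since
`λ_{l+1,k,b} = λ[A_{λ_{l,k,b}}(k,b)]` and `A` exceeds `N` of its index, from `l = 2` on
`Nλ ≤ N(λ_{l,k,b})`. The restriction `x ≥ 1` is needed: `(δ + ω^{γ+1})[0] = δ`. Finiteness follows because only finitely many notations have `Nα ≤ m`. -/

lemma ncount_zero : Ncount .zero = 0 := rfl

lemma ncount_oadd (e : ONote) (n : ℕ+) (a : ONote) :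
    Ncount (.oadd e n a) = n * (1 + Ncount e) + Ncount a := rfl

lemma ncount_dite_pred (e a : ONote) (n : ℕ+) :
    Ncount (if h : (n : ℕ) = 1 then a
      else .oadd e ⟨(n : ℕ) - 1, Nat.sub_pos_of_lt (lt_of_le_of_ne n.2 (Ne.symm h))⟩ a) +
        (1 + Ncount e) = Ncount (.oadd e n a) := by
  have hn : 0 < (n : ℕ) := n.pos
  split
  · simp only [Ncount, *]
    omega
  · simp only [Ncount, PNat.mk_coe]
    obtain ⟨m, hm⟩ : ∃ m, (n : ℕ) = m + 1 := ⟨(n : ℕ) - 1, by omega⟩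
    rw [hm, Nat.add_sub_cancel, Nat.succ_mul]
    omega

lemma ncount_eq_add_one_of_predO_eq_some :
    ∀ {α β : ONote}, predO α = some β → Ncount α = Ncount β + 1
  | .zero, _, h => by simp [predO] at h
  | .oadd .zero n .zero, β, h => by
    simp only [predO, Option.some.injEq] at h
    rw [← h, ← ncount_dite_pred]
    simp [Ncount]
  | .oadd (.oadd _ _ _) _ .zero, _, h => by simp [predO] at h
  | .oadd e n (.oadd e' n' a'), β, h => by
    simp only [predO, Option.map_eq_some_iff] at h
    obtain ⟨β', hβ', rfl⟩ := h
    have := ncount_eq_add_one_of_predO_eq_some hβ'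
    simp only [Ncount] at this ⊢
    omega

theorem ncount_fundSeq_bounds : ∀ (α : ONote) {x : ℕ}, α ≠ .zero → predO α = none → 1 ≤ x →
    x ≤ Ncount (fundSeq α x) ∧ Ncount α ≤ Ncount (fundSeq α x) + 1
  | .zero, _, h, _, _ => absurd rfl h
  | .oadd e n (.oadd e' n' a'), x, _, hp, hx => by
    simp only [predO, Option.map_eq_none_iff] at hp
    have := ncount_fundSeq_bounds (.oadd e' n' a') (by simp) hp hx
    simp only [fundSeq, Ncount] at this ⊢
    omega
  | .oadd .zero n .zero, _, _, hp, _ => by simp [predO] at hp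
  | .oadd (.oadd f m b) n .zero, x, _, _, hx => by
    obtain ⟨tail, hfund, hx_le, hle⟩ : ∃ tail : ONote,
        fundSeq (.oadd (.oadd f m b) n .zero) x = (if h : (n : ℕ) = 1 then tail
          else .oadd (.oadd f m b) ⟨(n : ℕ) - 1,
            Nat.sub_pos_of_lt (lt_of_le_of_ne n.2 (Ne.symm h))⟩ tail) ∧
        x ≤ Ncount tail ∧ Ncount (.oadd f m b) ≤ Ncount tail := by
      rcases hpe : predO (.oadd f m b) with _ | e'
      · have := ncount_fundSeq_bounds _ (by simp) hpe hx
        refine ⟨.oadd (fundSeq (.oadd f m b) x) 1 .zero, by simp only [fundSeq, hpe], ?_⟩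
        simp only [ncount_oadd _ 1 .zero, PNat.one_coe, one_mul, ncount_zero]
        omega
      · have hNe := ncount_eq_add_one_of_predO_eq_some hpe
        refine ⟨.oadd e' ⟨x, hx⟩ .zero,
          by simp only [fundSeq, hpe, dif_neg (by omega : x ≠ 0)], ?_⟩
        change x ≤ x * (1 + Ncount e') + 0 ∧ Ncount (.oadd f m b) ≤ x * (1 + Ncount e') + 0
        constructor <;> nlinarith
    have hsplit := ncount_dite_pred (.oadd f m b) tail n
    rw [← hfund, ncount_oadd (.oadd f m b) n tail] at hsplit
    have hn := Nat.le_mul_of_pos_left (1 + Ncount (.oadd f m b)) n.pos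
    rw [ncount_oadd (.oadd f m b) n .zero, ncount_zero]
    omega

section
variable {k : ℕ}

mutual
theorem EA.ncount_add_lt (hk : 2 ≤ k) {α : ONote} {b v : ℕ} : EA k α b v → Ncount α + b < v
  | .zero b => by rw [ncount_zero]; omega
  | .succZero hp hit => by
    have hβ := ncount_eq_add_one_of_predO_eq_some hp
    have := IterEA.add_mul_le hk hit
    nlinarith
  | .succStep hp hw hit => by
    have := EA.ncount_add_lt hk hw
    have := IterEA.add_mul_le hk hit
    nlinarith
  | .limZero hne hp hl hit => by
    have := LamSeq.ncount_le hk hne hp hl hk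
    have := IterEA.add_mul_le hk hit
    nlinarith
  | .limStep hne hp hw hl hit => by
    have := EA.ncount_add_lt hk hw
    have := IterEA.add_mul_le hk hit
    nlinarith

theorem IterEA.add_mul_le (hk : 2 ≤ k) {α : ONote} {n b v : ℕ} :
    IterEA k α n b v → b + n * (Ncount α + 1) ≤ v
  | .zero _ _ => by omega
  | .succ hit hw => by
    have := IterEA.add_mul_le hk hit
    have := EA.ncount_add_lt hk hw
    rw [Nat.succ_mul]
    omega

theorem LamSeq.ncount_le_add_one (hk : 2 ≤ k) {α μ : ONote} {b l : ℕ} (hne : α ≠ .zero)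
    (hp : predO α = none) : LamSeq k α b l μ → 1 ≤ l → Ncount α ≤ Ncount μ + 1
  | .zero _ _, hl => absurd hl (by omega)
  | .succ (v := v) _ hv, _ => by
    have := EA.ncount_add_lt hk hv
    exact (ncount_fundSeq_bounds α (x := v) hne hp (by omega)).2

theorem LamSeq.ncount_le (hk : 2 ≤ k) {α μ : ONote} {b l : ℕ} (hne : α ≠ .zero)
    (hp : predO α = none) : LamSeq k α b l μ → 2 ≤ l → Ncount α ≤ Ncount μ
  | .zero _ _, hl => absurd hl (by omega)
  | .succ (v := v) hμ hv, hl => by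
    have := LamSeq.ncount_le_add_one hk hne hp hμ (by omega)
    have := EA.ncount_add_lt hk hv
    have := (ncount_fundSeq_bounds α (x := v) hne hp (by omega)).1
    omega
end

end

lemma ncount_lt_ncount_oadd_left (e : ONote) (n : ℕ+) (a : ONote) :
    Ncount e < Ncount (.oadd e n a) := by
  have := Nat.le_mul_of_pos_left (1 + Ncount e) n.pos
  rw [ncount_oadd]
  omega

lemma coe_le_ncount_oadd (e : ONote) (n : ℕ+) (a : ONote) : (n : ℕ) ≤ Ncount (.oadd e n a) := by
  have := Nat.le_mul_of_pos_right (n : ℕ) (by omega : 0 < 1 + Ncount e)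
  rw [ncount_oadd]
  omega

lemma ncount_lt_ncount_oadd_right (e : ONote) (n : ℕ+) (a : ONote) :
    Ncount a < Ncount (.oadd e n a) := by
  have := Nat.mul_pos n.pos (by omega : 0 < 1 + Ncount e)
  rw [ncount_oadd]
  omega

theorem finite_setOf_ncount_le (m : ℕ) : {α : ONote | Ncount α ≤ m}.Finite := by
  induction m with
  | zero =>
    refine (Set.finite_singleton ONote.zero).subset ?_
    rintro (_ | ⟨e, n, a⟩) h
    · rfl
    · replace h : Ncount (.oadd e n a) ≤ 0 := h
      have := ncount_lt_ncount_oadd_left e n a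
      omega
  | succ m ih =>
    have hcoeff : {n : ℕ+ | (n : ℕ) ≤ m + 1}.Finite :=
      (Set.finite_Iic (m + 1)).preimage PNat.coe_injective.injOn
    refine (((ih.prod (hcoeff.prod ih)).image
      fun p => ONote.oadd p.1 p.2.1 p.2.2).insert ONote.zero).subset ?_
    rintro (_ | ⟨e, n, a⟩) h
    · exact Set.mem_insert _ _
    · replace h : Ncount (.oadd e n a) ≤ m + 1 := h
      have := ncount_lt_ncount_oadd_left e n a
      have := coe_le_ncount_oadd e n a
      have := ncount_lt_ncount_oadd_right e n a
      exact Set.mem_insert_of_mem _ ⟨(e, n, a),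
        ⟨(by omega : Ncount e ≤ m), (by omega : (n : ℕ) ≤ m + 1), (by omega : Ncount a ≤ m)⟩, rfl⟩

/-- `A_α(k,b) ≥ Nα + b`; consequently for every `m` (and `k`) there are only
finitely many `α < ε₀` with `A_α(k,0) ≤ m`. -/
theorem ea_ge_Ncount_and_finite :
    (∀ k : ℕ, 3 ≤ k → ∀ (α : ONote) (b v : ℕ), α.NF → EA k α b v →
      Ncount α + b ≤ v) ∧
    (∀ k m : ℕ, 3 ≤ k →
      {α : ONote | α.NF ∧ ∃ v, EA k α 0 v ∧ v ≤ m}.Finite) := by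
  refine ⟨fun k hk α b v _ h => (EA.ncount_add_lt (by omega) h).le, fun k m hk => ?_⟩
  refine (finite_setOf_ncount_le m).subset ?_
  rintro α ⟨-, v, hv, hvm⟩
  have := EA.ncount_add_lt (by omega) hv
  show Ncount α ≤ m
  omega
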